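/- arXiv:2201.04170 — 6 statements merged into one kernel-verified Lean document; each statement's English description precedes it below -/
import Mathlib

section
/- Let M_• ⊆ M'_• be filtrations of vector spaces over F (i.e., M_t ⊆ M'_t for all t ∈ T) with respective filtration compatible bases 𝔐 and 𝔐' satisfying 𝔐 ⊆ 𝔐'. Then the pointwise quotient persistence module M'_•/M_• (given by (M'_•/M_•)_t = M'_t/M_t with the induced maps) has a barcode given by the multiset of intervals (supp_{M'_•}(m) \ supp_{M_•}(m))_{m ∈ 𝔐} together with (supp_{M'_•}(m))_{m ∈ 𝔐' \ 𝔐}. -/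
/-- The support of an element `m` in a filtration `A` of subspaces:
the set of indices `t` with `m ∈ A t`. -/
def fsupp {F W : Type*} [Field F] [AddCommGroup W] [Module F W] {N : ℕ}
    (A : Fin (N + 1) → Submodule F W) (m : W) : Set (Fin (N + 1)) :=
  {t | m ∈ A t}

/-- A set `B` is a filtration compatible basis for the filtration `A` if it is a basis
of the final space `A (Fin.last N)` such that `B ∩ A t` is a basis of `A t` for every `t`. -/
def IsCompatBasis {F W : Type*} [Field F] [AddCommGroup W] [Module F W] {N : ℕ}
    (A : Fin (N + 1) → Submodule F W) (B : Set W) : Prop :=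
  B ⊆ ↑(A (Fin.last N)) ∧
  LinearIndependent F ((↑) : B → W) ∧
  ∀ t, Submodule.span F (B ∩ ↑(A t)) = A t

open Classical in
/-- The structure map from time `t` to time `u` of the direct sum of the interval
modules `C(I a)` for a family of intervals `I : ι → Set (Fin (N+1))`: the direct sum at
time `t` is realized as `{a // t ∈ I a} →₀ F`, and the map sends the basis element at
`a` to the basis element at `a` if `u ∈ I a`, and to `0` otherwise. -/
noncomputable def barMap {F : Type*} [Field F] {N : ℕ} {ι : Type*}
    (I : ι → Set (Fin (N + 1))) (u : Fin (N + 1)) {t : Fin (N + 1)} :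
    ({a : ι // t ∈ I a} →₀ F) →ₗ[F] ({a : ι // u ∈ I a} →₀ F) :=
  Finsupp.lsum F fun a =>
    if h : u ∈ I a.1 then Finsupp.lsingle (⟨a.1, h⟩ : {a : ι // u ∈ I a}) else 0

open Classical in
/-- The interval associated to an element `m` of the larger basis `𝔅'` in the barcode of
`M'_• / M_•`: for `m ∈ 𝔅` it is `supp_{M'}(m) \ supp_{M}(m)`, and for `m ∈ 𝔅' \ 𝔅` it is
`supp_{M'}(m)`. -/
noncomputable def quotInterval {F W : Type*} [Field F] [AddCommGroup W] [Module F W] {N : ℕ}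
    (M' M : Fin (N + 1) → Submodule F W) (𝔅 : Set W) (m : W) : Set (Fin (N + 1)) :=
  if m ∈ 𝔅 then fsupp M' m \ fsupp M m else fsupp M' m

/- Statement 0: the quotient persistence module `M'_• / M_•` (realized pointwise as the
quotient of `M' t` by the image of `M t` in it, with the maps induced by the inclusions)
has the barcode `(supp_{M'}(m) \ supp_{M}(m))_{m ∈ 𝔅} ∪ (supp_{M'}(m))_{m ∈ 𝔅' \ 𝔅}`,
i.e., it is isomorphic as a persistence module to the corresponding direct sum of interval
modules. -/
section Aux

variable {F W : Type*} [Field F] [AddCommGroup W] [Module F W] {N : ℕ}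
  {M' M : Fin (N + 1) → Submodule F W} {𝔅 𝔅' : Set W}

/-- basis elements of the big basis lying in `M t` must lie in `𝔅`. -/
lemma memB_of_memM (hB : IsCompatBasis M 𝔅) (hB' : IsCompatBasis M' 𝔅')
    (hBB' : 𝔅 ⊆ 𝔅') {a : W} (ha : a ∈ 𝔅') {t : Fin (N + 1)} (hat : a ∈ M t) : a ∈ 𝔅 := by
  by_contra ha𝔅
  have hs : (𝔅 : Set W) ⊆ (fun x : ↥𝔅' => (x : W)) '' {b : ↥𝔅' | (b : W) ∈ 𝔅} := by
    intro x hx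
    exact ⟨⟨x, hBB' hx⟩, hx, rfl⟩
  have hnot := hB'.2.1.notMem_span_image (s := {b : ↥𝔅' | (b : W) ∈ 𝔅}) (x := ⟨a, ha⟩) ha𝔅
  apply hnot
  have : a ∈ Submodule.span F (𝔅 ∩ ↑(M t)) := by rw [hB.2.2 t]; exact hat
  exact Submodule.span_mono (Set.Subset.trans Set.inter_subset_left hs) this

lemma quotInterval_eq (hB : IsCompatBasis M 𝔅) (hB' : IsCompatBasis M' 𝔅')
    (hBB' : 𝔅 ⊆ 𝔅') {a : W} (ha : a ∈ 𝔅') :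
    quotInterval M' M 𝔅 a = fsupp M' a \ fsupp M a := by
  unfold quotInterval
  split_ifs with h
  · rfl
  · have : fsupp M a = ∅ := by
      ext t
      simp only [fsupp, Set.mem_setOf_eq, Set.mem_empty_iff_false, iff_false]
      exact fun hat => h (memB_of_memM hB hB' hBB' ha hat)
    rw [this, Set.diff_empty]

lemma mem_M'_of_mem_quotInterval {a : W} {t : Fin (N + 1)}
    (h : t ∈ quotInterval M' M 𝔅 a) : a ∈ M' t := by
  unfold quotInterval at h
  split_ifs at h with h'
  · exact h.1
  · exact h

/-- The intersection of the big basis with `M t` agrees with that of the small one. -/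
lemma inter_eq (hB : IsCompatBasis M 𝔅) (hB' : IsCompatBasis M' 𝔅')
    (hBB' : 𝔅 ⊆ 𝔅') (t : Fin (N + 1)) : 𝔅' ∩ ↑(M t) = 𝔅 ∩ ↑(M t) := by
  ext x
  constructor
  · rintro ⟨hx, hxt⟩
    exact ⟨memB_of_memM hB hB' hBB' hx hxt, hxt⟩
  · rintro ⟨hx, hxt⟩
    exact ⟨hBB' hx, hxt⟩

/-- Module.Basis of `M' t` indexed by `𝔅' ∩ M' t`. -/
noncomputable def auxBasis (hB' : IsCompatBasis M' 𝔅') (t : Fin (N + 1)) :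
    Module.Basis ↥(𝔅' ∩ ↑(M' t)) F ↥(M' t) :=
  (Module.Basis.span (show LinearIndependent F ((↑) : ↥(𝔅' ∩ ↑(M' t)) → W) from
    LinearIndepOn.mono (v := id) hB'.2.1 Set.inter_subset_left)).map
    (LinearEquiv.ofEq _ _ (by rw [Subtype.range_coe]; exact hB'.2.2 t))

lemma auxBasis_apply (hB' : IsCompatBasis M' 𝔅') (t : Fin (N + 1))
    (i : ↥(𝔅' ∩ ↑(M' t))) : (auxBasis hB' t i : W) = (i : W) := by
  simp only [auxBasis, Module.Basis.map_apply]
  rw [LinearEquiv.coe_ofEq_apply]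
  rw [Module.Basis.span_apply]

end Aux

section Aux2

variable {F W : Type*} [Field F] [AddCommGroup W] [Module F W] {N : ℕ}

open Classical in
noncomputable def auxG (M' M : Fin (N + 1) → Submodule F W) (𝔅 𝔅' : Set W) (t : Fin (N + 1))
    (i : ↥(𝔅' ∩ ↑(M' t))) :
    F →ₗ[F] ({a : ↥𝔅' // t ∈ quotInterval M' M 𝔅 (a : W)} →₀ F) :=
  if h : t ∈ quotInterval M' M 𝔅 (i : W) then
    Finsupp.lsingle (⟨⟨(i : W), i.2.1⟩, h⟩ : {a : ↥𝔅' // t ∈ quotInterval M' M 𝔅 (a : W)})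
  else 0

noncomputable def auxPhi (M' M : Fin (N + 1) → Submodule F W) (𝔅 𝔅' : Set W)
    (hB' : IsCompatBasis M' 𝔅') (t : Fin (N + 1)) :
    ↥(M' t) →ₗ[F] ({a : ↥𝔅' // t ∈ quotInterval M' M 𝔅 (a : W)} →₀ F) :=
  (Finsupp.lsum F (auxG M' M 𝔅 𝔅' t)) ∘ₗ (auxBasis hB' t).repr.toLinearMap

lemma auxPhi_basis (M' M : Fin (N + 1) → Submodule F W) (𝔅 𝔅' : Set W)
    (hB' : IsCompatBasis M' 𝔅') (t : Fin (N + 1)) (i : ↥(𝔅' ∩ ↑(M' t))) :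
    auxPhi M' M 𝔅 𝔅' hB' t (auxBasis hB' t i) = auxG M' M 𝔅 𝔅' t i 1 := by
  simp [auxPhi]

lemma lsum_coord (M' M : Fin (N + 1) → Submodule F W) (𝔅 𝔅' : Set W) (t : Fin (N + 1))
    (f : ↥(𝔅' ∩ ↑(M' t)) →₀ F) (a : {a : ↥𝔅' // t ∈ quotInterval M' M 𝔅 (a : W)})
    (i : ↥(𝔅' ∩ ↑(M' t))) (hi : (i : W) = ((a : ↥𝔅') : W)) :
    (Finsupp.lsum F (auxG M' M 𝔅 𝔅' t) f) a = f i := by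
  rw [Finsupp.lsum_apply, Finsupp.sum, Finsupp.finset_sum_apply]
  rw [Finset.sum_eq_single i]
  · have ht : t ∈ quotInterval M' M 𝔅 (i : W) := by rw [hi]; exact a.2
    rw [auxG, dif_pos ht]
    have : (⟨⟨(i : W), i.2.1⟩, ht⟩ : {a : ↥𝔅' // t ∈ quotInterval M' M 𝔅 (a : W)}) = a :=
      Subtype.ext (Subtype.ext hi)
    rw [this, Finsupp.lsingle_apply, Finsupp.single_eq_same]
  · intro j _ hj
    rw [auxG]
    split_ifs with h'
    · rw [Finsupp.lsingle_apply, Finsupp.single_eq_of_ne]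
      intro hja
      apply hj
      apply Subtype.ext
      rw [hi]
      exact (congrArg (fun x : {a : ↥𝔅' // t ∈ quotInterval M' M 𝔅 (a : W)} =>
        ((x : ↥𝔅') : W)) hja).symm
    · rfl
  · intro hns
    rw [Finsupp.notMem_support_iff.1 hns, map_zero, Finsupp.coe_zero, Pi.zero_apply]

end Aux2

section Aux3

variable {F W : Type*} [Field F] [AddCommGroup W] [Module F W] {N : ℕ}
  {M' M : Fin (N + 1) → Submodule F W} {𝔅 𝔅' : Set W}

lemma auxPhi_surj (hB' : IsCompatBasis M' 𝔅') (t : Fin (N + 1)) :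
    Function.Surjective (auxPhi M' M 𝔅 𝔅' hB' t) := by
  rw [← LinearMap.range_eq_top, eq_top_iff]
  intro f _
  induction f using Finsupp.induction_linear with
  | zero => exact Submodule.zero_mem _
  | add f g hf hg => exact Submodule.add_mem _ (hf trivial) (hg trivial)
  | single a c =>
    have haM' : ((a : ↥𝔅') : W) ∈ M' t := mem_M'_of_mem_quotInterval a.2
    refine ⟨c • auxBasis hB' t ⟨((a : ↥𝔅') : W), ⟨(a : ↥𝔅').2, haM'⟩⟩, ?_⟩
    rw [map_smul, auxPhi_basis, auxG, dif_pos (show t ∈ quotInterval M' M 𝔅 _ from a.2)]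
    have : (⟨⟨((a : ↥𝔅') : W), (a : ↥𝔅').2⟩, a.2⟩ :
        {a : ↥𝔅' // t ∈ quotInterval M' M 𝔅 (a : W)}) = a :=
      Subtype.ext (Subtype.ext rfl)
    rw [Finsupp.lsingle_apply, this, Finsupp.smul_single, smul_eq_mul, mul_one]

lemma auxPhi_ker (hB : IsCompatBasis M 𝔅) (hB' : IsCompatBasis M' 𝔅') (hBB' : 𝔅 ⊆ 𝔅')
    (hsub : ∀ t, M t ≤ M' t) (t : Fin (N + 1)) :
    LinearMap.ker (auxPhi M' M 𝔅 𝔅' hB' t) = Submodule.comap (M' t).subtype (M t) := by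
  have himg : (M' t).subtype '' ((auxBasis hB' t) '' {i : ↥(𝔅' ∩ ↑(M' t)) | (i : W) ∈ M t})
      = 𝔅 ∩ ↑(M t) := by
    ext x
    constructor
    · rintro ⟨y, ⟨i, hiS, rfl⟩, rfl⟩
      have : ((M' t).subtype (auxBasis hB' t i) : W) = (i : W) := auxBasis_apply hB' t i
      rw [this]
      exact ⟨memB_of_memM hB hB' hBB' i.2.1 hiS, hiS⟩
    · rintro ⟨hx𝔅, hxM⟩
      refine ⟨auxBasis hB' t ⟨x, ⟨hBB' hx𝔅, hsub t hxM⟩⟩,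
        ⟨⟨x, ⟨hBB' hx𝔅, hsub t hxM⟩⟩, hxM, rfl⟩, auxBasis_apply hB' t _⟩
  have hS : Submodule.comap (M' t).subtype (M t)
      = Submodule.span F ((auxBasis hB' t) '' {i : ↥(𝔅' ∩ ↑(M' t)) | (i : W) ∈ M t}) := by
    apply Submodule.map_injective_of_injective
      (show Function.Injective (M' t).subtype from Subtype.coe_injective)
    rw [Submodule.map_comap_subtype, inf_eq_right.2 (hsub t), Submodule.map_span, himg,
      hB.2.2 t]
  rw [hS]
  apply le_antisymm
  · intro x hx
    rw [LinearMap.mem_ker] at hx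
    rw [Module.Basis.mem_span_image]
    intro i hi
    simp only [Finset.mem_coe, Finsupp.mem_support_iff] at hi
    by_contra hiM
    have ht : t ∈ quotInterval M' M 𝔅 (i : W) := by
      rw [quotInterval_eq hB hB' hBB' i.2.1]
      exact ⟨i.2.2, hiM⟩
    have := lsum_coord M' M 𝔅 𝔅' t ((auxBasis hB' t).repr x) ⟨⟨(i : W), i.2.1⟩, ht⟩ i rfl
    apply hi
    rw [← this]
    show (auxPhi M' M 𝔅 𝔅' hB' t x) _ = 0
    rw [hx]
    rfl
  · rw [Submodule.span_le]
    rintro y ⟨i, hiS, rfl⟩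
    rw [SetLike.mem_coe, LinearMap.mem_ker, auxPhi_basis, auxG, dif_neg]
    · rfl
    · rw [quotInterval_eq hB hB' hBB' i.2.1]
      exact fun h => h.2 hiS

end Aux3

section Aux4

variable {F W : Type*} [Field F] [AddCommGroup W] [Module F W] {N : ℕ}
  {M' M : Fin (N + 1) → Submodule F W} {𝔅 𝔅' : Set W}

open Classical in
lemma barMap_single {ι : Type*} (I : ι → Set (Fin (N + 1))) (u t : Fin (N + 1))
    (a : {a : ι // t ∈ I a}) (c : F) :
    barMap I u (Finsupp.single a c)
      = if h : u ∈ I a.1 then Finsupp.single (⟨a.1, h⟩ : {a : ι // u ∈ I a}) c else 0 := by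
  rw [barMap, Finsupp.lsum_single]
  split_ifs with h
  · rw [Finsupp.lsingle_apply]
  · rfl

lemma auxPhi_compat (hB : IsCompatBasis M 𝔅) (hB' : IsCompatBasis M' 𝔅') (hBB' : 𝔅 ⊆ 𝔅')
    (hsub : ∀ t, M t ≤ M' t) (hMmono : Monotone M) (hM'mono : Monotone M')
    {t u : Fin (N + 1)} (h : t ≤ u) :
    (auxPhi M' M 𝔅 𝔅' hB' u) ∘ₗ Submodule.inclusion (hM'mono h)
      = (barMap (fun a : ↥𝔅' => quotInterval M' M 𝔅 (a : W)) u) ∘ₗ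
        auxPhi M' M 𝔅 𝔅' hB' t := by
  apply Module.Basis.ext (auxBasis hB' t)
  intro i
  have hIncl : Submodule.inclusion (hM'mono h) (auxBasis hB' t i)
      = auxBasis hB' u ⟨(i : W), ⟨i.2.1, hM'mono h i.2.2⟩⟩ := by
    apply Subtype.ext
    rw [Submodule.coe_inclusion, auxBasis_apply, auxBasis_apply]
  rw [LinearMap.comp_apply, LinearMap.comp_apply, hIncl, auxPhi_basis, auxPhi_basis]
  by_cases h1 : t ∈ quotInterval M' M 𝔅 (i : W)
  · rw [auxG, auxG, dif_pos h1, Finsupp.lsingle_apply, barMap_single]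
    by_cases h2 : u ∈ quotInterval M' M 𝔅 (i : W)
    · rw [dif_pos h2, dif_pos h2, Finsupp.lsingle_apply]
    · rw [dif_neg h2, dif_neg h2]
      rfl
  · -- then `↑i ∈ M t`, hence `↑i ∈ M u`, hence `u ∉ quotInterval`
    have hiMt : (i : W) ∈ M t := by
      by_contra hiM
      exact h1 ((quotInterval_eq hB hB' hBB' i.2.1).symm ▸ ⟨i.2.2, hiM⟩)
    have h2 : u ∉ quotInterval M' M 𝔅 (i : W) := by
      rw [quotInterval_eq hB hB' hBB' i.2.1]
      exact fun hu => hu.2 (hMmono h hiMt)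
    rw [auxG, auxG, dif_neg h1, dif_neg h2]
    simp

end Aux4

theorem stmt0 {F W : Type*} [Field F] [AddCommGroup W] [Module F W] {N : ℕ}
    (M' M : Fin (N + 1) → Submodule F W)
    (hM'mono : Monotone M') (hMmono : Monotone M)
    (hsub : ∀ t, M t ≤ M' t)
    (𝔅 𝔅' : Set W)
    (hB : IsCompatBasis M 𝔅) (hB' : IsCompatBasis M' 𝔅')
    (hBB' : 𝔅 ⊆ 𝔅') :
    ∃ e : ∀ t, (↥(M' t) ⧸ Submodule.comap (M' t).subtype (M t)) ≃ₗ[F]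
        ({a : ↥𝔅' // t ∈ quotInterval M' M 𝔅 (a : W)} →₀ F),
      ∀ (t u : Fin (N + 1)) (h : t ≤ u) (x : ↥(M' t)),
        e u (Submodule.Quotient.mk (Submodule.inclusion (hM'mono h) x)) =
          barMap (fun a : ↥𝔅' => quotInterval M' M 𝔅 (a : W)) u
            (e t (Submodule.Quotient.mk x)) := by
  refine ⟨fun t => (Submodule.quotEquivOfEq _ _ (auxPhi_ker hB hB' hBB' hsub t).symm) ≪≫ₗ
      (auxPhi M' M 𝔅 𝔅' hB' t).quotKerEquivOfSurjective (auxPhi_surj hB' t), ?_⟩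
  have emk : ∀ (s : Fin (N + 1)) (y : ↥(M' s)),
      ((Submodule.quotEquivOfEq _ _ (auxPhi_ker hB hB' hBB' hsub s).symm) ≪≫ₗ
      (auxPhi M' M 𝔅 𝔅' hB' s).quotKerEquivOfSurjective (auxPhi_surj hB' s))
        (Submodule.Quotient.mk y) = auxPhi M' M 𝔅 𝔅' hB' s y := by
    intro s y
    simp [LinearMap.quotKerEquivOfSurjective, Submodule.quotEquivOfEq_mk,
      LinearMap.quotKerEquivRange_apply_mk]
  intro t u h x
  rw [emk, emk]
  exact LinearMap.congr_fun (auxPhi_compat hB hB' hBB' hsub hMmono hM'mono h) x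
end

section
/- Let M'_• and M''_• be filtrations of vector spaces, both contained in a filtration M_• (i.e., M'_t ⊆ M_t and M''_t ⊆ M_t for all t), and let 𝔐' and 𝔐'' be filtration compatible bases for M'_• and M''_• respectively, such that the union 𝔐' ∪ 𝔐'' is linearly independent. Then 𝔐' ∩ 𝔐'' is a filtration compatible basis for the pointwise intersection filtration M'_• ∩ M''_• (given by (M'_• ∩ M''_•)_t = M'_t ∩ M''_t), and for all m ∈ 𝔐' ∩ 𝔐'' one has supp_{M'_• ∩ M''_•}(m) = supp_{M'_•}(m) ∩ supp_{M''_•}(m). -/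
lemma disjoint_span_of_li {F W : Type*} [Field F] [AddCommGroup W] [Module F W]
    {B u v : Set W} (hB : LinearIndependent F ((↑) : B → W))
    (hu : u ⊆ B) (hv : v ⊆ B) (hd : Disjoint u v) :
    Disjoint (Submodule.span F u) (Submodule.span F v) := by
  have h := hB.disjoint_span_image (s := (Subtype.val ⁻¹' u)) (t := (Subtype.val ⁻¹' v))
    (hd.preimage _)
  rwa [Subtype.image_preimage_coe, Subtype.image_preimage_coe,
    Set.inter_eq_right.2 hu, Set.inter_eq_right.2 hv] at h

lemma span_inter_of_li {F W : Type*} [Field F] [AddCommGroup W] [Module F W]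
    {B S T : Set W} (hB : LinearIndependent F ((↑) : B → W))
    (hS : S ⊆ B) (hT : T ⊆ B) :
    Submodule.span F S ⊓ Submodule.span F T = Submodule.span F (S ∩ T) := by
  refine le_antisymm ?_ (le_inf (Submodule.span_mono Set.inter_subset_left)
    (Submodule.span_mono Set.inter_subset_right))
  rintro x ⟨hxS, hxT⟩
  have hdecomp : x ∈ Submodule.span F (S ∩ T) ⊔ Submodule.span F (S \ T) := by
    rw [← Submodule.span_union]
    refine Submodule.span_mono (fun y hy => ?_) hxS
    by_cases h : y ∈ T
    · exact Or.inl ⟨hy, h⟩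
    · exact Or.inr ⟨hy, h⟩
  obtain ⟨a, ha, b, hb, rfl⟩ := Submodule.mem_sup.1 hdecomp
  have hbT : b ∈ Submodule.span F T := by
    have haT : a ∈ Submodule.span F T := Submodule.span_mono Set.inter_subset_right ha
    simpa using Submodule.sub_mem _ hxT haT
  have hdisj : Disjoint (Submodule.span F (S \ T)) (Submodule.span F T) :=
    disjoint_span_of_li hB ((Set.diff_subset).trans hS) hT
      (Set.disjoint_left.2 fun y hy => hy.2)
  have hb0 : b = 0 := Submodule.disjoint_def.1 hdisj b hb hbT
  simpa [hb0] using ha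

theorem stmt2 {F W : Type*} [Field F] [AddCommGroup W] [Module F W] {N : ℕ}
    (A A' A'' : Fin (N + 1) → Submodule F W)
    (hAmono : Monotone A) (hA'mono : Monotone A') (hA''mono : Monotone A'')
    (hsub' : ∀ t, A' t ≤ A t) (hsub'' : ∀ t, A'' t ≤ A t)
    (B' B'' : Set W)
    (hB' : IsCompatBasis A' B') (hB'' : IsCompatBasis A'' B'')
    (hunion : LinearIndependent F ((↑) : ↥(B' ∪ B'') → W)) :
    IsCompatBasis (fun t => A' t ⊓ A'' t) (B' ∩ B'') ∧
    ∀ m ∈ B' ∩ B'', fsupp (fun t => A' t ⊓ A'' t) m = fsupp A' m ∩ fsupp A'' m := by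
  obtain ⟨hB'sub, hB'li, hB'span⟩ := hB'
  obtain ⟨hB''sub, hB''li, hB''span⟩ := hB''
  refine ⟨⟨?_, ?_, ?_⟩, ?_⟩
  · intro m hm
    exact Submodule.mem_inf.2 ⟨hB'sub hm.1, hB''sub hm.2⟩
  · exact LinearIndepOn.mono (R := F) (v := id) hunion (Set.inter_subset_left.trans Set.subset_union_left)
  · intro t
    have key := span_inter_of_li (B := B' ∪ B'') hunion
      (S := B' ∩ ↑(A' t)) (T := B'' ∩ ↑(A'' t))
      (Set.inter_subset_left.trans Set.subset_union_left)
      (Set.inter_subset_left.trans Set.subset_union_right)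
    rw [hB'span, hB''span] at key
    show Submodule.span F (B' ∩ B'' ∩ ↑(A' t ⊓ A'' t)) = A' t ⊓ A'' t
    have hset : (B' ∩ B'' ∩ ↑(A' t ⊓ A'' t) : Set W)
        = B' ∩ ↑(A' t) ∩ (B'' ∩ ↑(A'' t)) := by
      ext y
      simp only [Set.mem_inter_iff, SetLike.mem_coe, Submodule.mem_inf]
      tauto
    rw [hset]
    exact key.symm
  · intro m _
    ext t
    simp [fsupp, Submodule.mem_inf, Set.mem_inter_iff]
end

section
/- Let φ_•: M_• → P_• be a morphism of filtrations of vector spaces (i.e., a linear map φ: M → P with φ(M_t) ⊆ P_t for all t, with φ_t the restriction of φ to M_t). Let 𝔐 be a filtration compatible basis for M_•, set 𝔐' = 𝔐 ∩ ker φ, and assume that the family 𝔐'' = (φ(m))_{m ∈ 𝔐 \ 𝔐'} is linearly independent. Then: (1) 𝔐' is a filtration compatible basis for the kernel filtration ker φ_• (given by (ker φ_•)_t = M_t ∩ ker φ), with supp_{ker φ_•}(m') = supp_{M_•}(m') for all m' ∈ 𝔐'; and (2) 𝔐'' is a filtration compatible basis for the image filtration im φ_• (given by (im φ_•)_t = φ(M_t),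 a filtration of φ(M)), with supp_{im φ_•}(φ(m)) = supp_{M_•}(m) for all m ∈ 𝔐 \ 𝔐'. -/
set_option maxHeartbeats 1000000 in
theorem stmt3 {F M P : Type*} [Field F] [AddCommGroup M] [Module F M]
    [AddCommGroup P] [Module F P] {N : ℕ}
    (A : Fin (N + 1) → Submodule F M) (hAmono : Monotone A) (hAtop : A (Fin.last N) = ⊤)
    (Q : Fin (N + 1) → Submodule F P) (hQmono : Monotone Q) (hQtop : Q (Fin.last N) = ⊤)
    (φ : M →ₗ[F] P) (hφ : ∀ t, (A t).map φ ≤ Q t)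
    (B : Set M) (hB : IsCompatBasis A B)
    (hindep : LinearIndependent F
      (fun m : ↥(B \ ↑(LinearMap.ker φ)) => φ (m : M))) :
    (IsCompatBasis (fun t => A t ⊓ LinearMap.ker φ) (B ∩ ↑(LinearMap.ker φ)) ∧
      ∀ m ∈ B ∩ ↑(LinearMap.ker φ),
        fsupp (fun t => A t ⊓ LinearMap.ker φ) m = fsupp A m) ∧
    (IsCompatBasis (fun t => (A t).map φ) (φ '' (B \ ↑(LinearMap.ker φ))) ∧
      ∀ m ∈ B \ ↑(LinearMap.ker φ),
        fsupp (fun t => (A t).map φ) (φ m) = fsupp A m) := by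
  classical
  obtain ⟨hBsub, hBind, hBspan⟩ := hB
  set K : Submodule F M := LinearMap.ker φ with hKdef
  -- independence criterion for the image family
  have hindep' : ∀ l : M →₀ F, l ∈ Finsupp.supported F F (B \ ↑K) →
      Finsupp.linearCombination F (fun m => φ m) l = 0 → l = 0 := by
    exact linearIndepOn_iff.mp hindep
  -- key lemma: kernel elements of span of a subset of B lie in the span of the kernel part
  have key : ∀ S : Set M, S ⊆ B → ∀ x ∈ Submodule.span F S, φ x = 0 →
      x ∈ Submodule.span F (S ∩ ↑K) := by
    intro S hS x hx hx0
    obtain ⟨c, hcsupp, hcsum⟩ := Submodule.mem_span_set.mp hx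
    set c1 := c.filter (fun m => m ∈ K) with hc1
    set c2 := c.filter (fun m => m ∉ K) with hc2
    have hsplit : c1 + c2 = c := Finsupp.filter_pos_add_filter_neg c (fun m => m ∈ K)
    have hφc : Finsupp.linearCombination F (fun m : M => φ m) c = 0 := by
      have h1 : Finsupp.linearCombination F (fun m : M => φ m) c = φ x := by
        rw [← hcsum, Finsupp.linearCombination_apply, Finsupp.sum, Finsupp.sum, map_sum]
        simp [map_smul]
      rw [h1, hx0]
    have h1 : Finsupp.linearCombination F (fun m : M => φ m) c1 = 0 := by
      rw [Finsupp.linearCombination_apply, Finsupp.sum]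
      apply Finset.sum_eq_zero
      intro m hm
      have hmK : m ∈ K := by
        have := Finsupp.support_filter (p := fun m => m ∈ K) (f := c) ▸ hm
        exact (Finset.mem_filter.mp this).2
      rw [LinearMap.mem_ker.mp hmK, smul_zero]
    have h2 : Finsupp.linearCombination F (fun m : M => φ m) c2 = 0 := by
      have := map_add (Finsupp.linearCombination F (fun m : M => φ m)) c1 c2
      rw [hsplit, hφc, h1, zero_add] at this
      exact this.symm
    have hc2supp : c2 ∈ Finsupp.supported F F (B \ ↑K) := by
      intro m hm
      have hm' := Finsupp.support_filter (p := fun m => ¬ m ∈ K) (f := c) ▸ hm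
      obtain ⟨hmc, hmK⟩ := Finset.mem_filter.mp hm'
      exact ⟨hS (hcsupp hmc), hmK⟩
    have hc20 : c2 = 0 := hindep' c2 hc2supp h2
    have hc : c1 = c := by rw [← hsplit, hc20, add_zero]
    apply Submodule.mem_span_set.mpr
    refine ⟨c1, ?_, by rw [hc]; exact hcsum⟩
    intro m hm
    have hm' := Finsupp.support_filter (p := fun m => m ∈ K) (f := c) ▸ hm
    obtain ⟨hmc, hmK⟩ := Finset.mem_filter.mp hm'
    exact ⟨hcsupp hmc, hmK⟩
  have hBA : ∀ t, (B ∩ ↑(A t) : Set M) ⊆ B := fun t => Set.inter_subset_left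
  have hkerspan : ∀ t, Submodule.span F (B ∩ ↑(A t) ∩ ↑K) = A t ⊓ K := by
    intro t
    apply le_antisymm
    · rw [Submodule.span_le]
      rintro m ⟨⟨_, hmA⟩, hmK⟩
      exact ⟨hmA, hmK⟩
    · rintro x ⟨hxA, hxK⟩
      have hx : x ∈ Submodule.span F (B ∩ ↑(A t)) := by rw [hBspan t]; exact hxA
      exact key (B ∩ ↑(A t)) (hBA t) x hx (LinearMap.mem_ker.mp hxK)
  have hBlast : B ∩ ↑(A (Fin.last N)) = B := by
    rw [hAtop]; simp
  have hkerB : Submodule.span F (B ∩ ↑K) = K := by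
    have := hkerspan (Fin.last N)
    rwa [hBlast, hAtop, top_inf_eq] at this
  constructor
  · constructor
    · refine ⟨?_, LinearIndepOn.mono (R := F) (v := (id : M → M)) (s := B) hBind Set.inter_subset_left, ?_⟩
      · rintro m ⟨hmB, hmK⟩
        exact ⟨by rw [hAtop]; trivial, hmK⟩
      · intro t
        have hset : (B ∩ ↑K) ∩ ↑(A t ⊓ K) = B ∩ ↑(A t) ∩ ↑K := by
          ext m
          simp only [Set.mem_inter_iff, SetLike.mem_coe, Submodule.mem_inf]
          tauto
        rw [hset]
        exact hkerspan t
    · rintro m ⟨hmB, hmK⟩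
      ext t
      simp only [fsupp, Set.mem_setOf_eq, Submodule.mem_inf]
      exact ⟨fun h => h.1, fun h => ⟨h, hmK⟩⟩
  · constructor
    · refine ⟨?_, ?_, ?_⟩
      · rintro _ ⟨m, hm, rfl⟩
        exact ⟨m, by rw [hAtop]; trivial, rfl⟩
      · exact LinearIndepOn.id_image (v := (φ : M → P)) hindep
      · intro t
        apply le_antisymm
        · rw [Submodule.span_le]
          rintro y ⟨_, hy⟩
          exact hy
        · rintro _ ⟨x, hxA, rfl⟩
          have hx : x ∈ Submodule.span F (B ∩ ↑(A t)) := by rw [hBspan t]; exact hxA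
          have himg : φ x ∈ Submodule.span F (φ '' (B ∩ ↑(A t))) := by
            rw [← Submodule.map_span]
            exact Submodule.mem_map_of_mem hx
          have hsub : φ '' (B ∩ ↑(A t)) ⊆
              ↑(Submodule.span F (φ '' (B \ ↑K) ∩ ↑((A t).map φ))) := by
            rintro _ ⟨m, ⟨hmB, hmA⟩, rfl⟩
            by_cases hmK : m ∈ K
            · rw [LinearMap.mem_ker.mp hmK]
              exact Submodule.zero_mem _
            · exact Submodule.subset_span ⟨⟨m, ⟨hmB, hmK⟩, rfl⟩, ⟨m, hmA, rfl⟩⟩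
          exact Submodule.span_le.mpr hsub himg
    · rintro m ⟨hmB, hmK⟩
      ext t
      simp only [fsupp, Set.mem_setOf_eq]
      constructor
      · rintro ⟨x, hxA, hxm⟩
        by_contra hmA
        have hdiff : m - x ∈ Submodule.span F (B ∩ ↑K) := by
          rw [hkerB]
          simp [hKdef, hxm, sub_eq_zero]
        have hxspan : x ∈ Submodule.span F (B ∩ ↑(A t)) := by rw [hBspan t]; exact hxA
        have hmem : m ∈ Submodule.span F (B ∩ (↑(A t) ∪ ↑K)) := by
          have : m = x + (m - x) := by abel
          rw [this, Set.inter_union_distrib_left]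
          exact Submodule.add_mem _
            (Submodule.span_mono Set.subset_union_left hxspan)
            (Submodule.span_mono Set.subset_union_right hdiff)
        have hnot : m ∉ Submodule.span F (B ∩ (↑(A t) ∪ ↑K)) := by
          have hx' : (⟨m, hmB⟩ : ↥B) ∉ ((fun b : ↥B => (b : M)) ⁻¹' ((↑(A t) : Set M) ∪ (↑K : Set M))) := by
            simp only [Set.mem_preimage, Set.mem_union, SetLike.mem_coe]
            push_neg
            exact ⟨hmA, hmK⟩
          have := LinearIndependent.notMem_span_image hBind (x := (⟨m, hmB⟩ : ↥B)) hx'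
          have himg : (fun b : ↥B => (b : M)) '' ((fun b : ↥B => (b : M)) ⁻¹' ((↑(A t) : Set M) ∪ (↑K : Set M))) = B ∩ (↑(A t) ∪ ↑K) := by
            rw [Set.image_preimage_eq_inter_range, Subtype.range_coe]
            exact Set.inter_comm _ _
          rwa [himg] at this
        exact hnot hmem
      · intro h
        exact ⟨m, h, rfl⟩
end

section
/- If M_• is a filtration of a finite-dimensional vector space M and 𝔐 is a filtration compatible basis of M, then M_• has a barcode given by the multiset of intervals (supp_{M_•}(m))_{m ∈ 𝔐}; that is, M_• is isomorphic as a persistence module to the direct sum ⊕_{m ∈ 𝔐} C(supp_{M_•}(m))_•. -/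
noncomputable def filtBasis {F W : Type*} [Field F] [AddCommGroup W] [Module F W] {N : ℕ}
    (A : Fin (N + 1) → Submodule F W) (B : Set W)
    (hind : LinearIndependent F ((↑) : B → W))
    (hspan : ∀ t, Submodule.span F (B ∩ ↑(A t)) = A t) (t : Fin (N + 1)) :
    Module.Basis {a : ↥B // t ∈ fsupp A (a : W)} F ↥(A t) := by
  refine Module.Basis.mk (v := fun a => (⟨(a.1 : W), a.2⟩ : A t)) ?_ ?_
  · have h1 : LinearIndependent F fun a : {a : ↥B // t ∈ fsupp A (a : W)} => (a.1 : W) :=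
      hind.comp (fun a => a.1) (fun a b hab => Subtype.ext hab)
    exact h1.of_comp (A t).subtype
  · rintro ⟨x, hx⟩ -
    have hx' : x ∈ Submodule.span F (B ∩ ↑(A t)) := by rw [hspan t]; exact hx
    have : Submodule.map (A t).subtype
        (Submodule.span F (Set.range fun a : {a : ↥B // t ∈ fsupp A (a : W)} =>
          (⟨(a.1 : W), a.2⟩ : A t))) = Submodule.span F (B ∩ ↑(A t)) := by
      rw [Submodule.map_span]
      congr 1
      ext y
      constructor
      · rintro ⟨z, ⟨a, rfl⟩, rfl⟩
        exact ⟨a.1.2, a.2⟩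
      · rintro ⟨hy1, hy2⟩
        exact ⟨⟨y, hy2⟩, ⟨⟨⟨y, hy1⟩, hy2⟩, rfl⟩, rfl⟩
    have hx2 : x ∈ Submodule.map (A t).subtype
        (Submodule.span F (Set.range fun a : {a : ↥B // t ∈ fsupp A (a : W)} =>
          (⟨(a.1 : W), a.2⟩ : A t))) := by rw [this]; exact hx'
    obtain ⟨z, hz, hzx⟩ := hx2
    cases hzx
    exact hz

/- Statement 4: a filtration with a filtration compatible basis `B` is isomorphic, as a
persistence module, to the direct sum of the interval modules on the supports of the
elements of `B`; the isomorphism is given by linear equivalences `e t` commuting with the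
structure maps (inclusions on one side, `barMap` on the other). -/
theorem stmt4 {F W : Type*} [Field F] [AddCommGroup W] [Module F W]
    [FiniteDimensional F W] {N : ℕ}
    (A : Fin (N + 1) → Submodule F W) (hmono : Monotone A) (htop : A (Fin.last N) = ⊤)
    (B : Set W) (hB : IsCompatBasis A B) :
    ∃ e : ∀ t, ↥(A t) ≃ₗ[F] ({a : ↥B // t ∈ fsupp A (a : W)} →₀ F),
      ∀ (t u : Fin (N + 1)) (h : t ≤ u) (x : ↥(A t)),
        e u (Submodule.inclusion (hmono h) x) =
          barMap (fun a : ↥B => fsupp A (a : W)) u (e t x) := by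
  obtain ⟨hsub, hind, hspan⟩ := hB
  set b := filtBasis A B hind hspan with hb
  refine ⟨fun t => (b t).repr, ?_⟩
  intro t u h x
  have key : ((b u).repr.toLinearMap ∘ₗ Submodule.inclusion (hmono h)) =
      (barMap (fun a : ↥B => fsupp A (a : W)) u) ∘ₗ (b t).repr.toLinearMap := by
    apply (b t).ext
    intro a
    have ha : u ∈ fsupp A (a.1 : W) := hmono h a.2
    have h1 : Submodule.inclusion (hmono h) (b t a) = b u ⟨a.1, ha⟩ := by
      apply Subtype.ext
      simp [hb, filtBasis, Module.Basis.coe_mk]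
    simp only [LinearMap.comp_apply, LinearEquiv.coe_coe, h1, Module.Basis.repr_self]
    rw [barMap, Finsupp.lsum_single, dif_pos ha]
    simp
  exact (LinearMap.congr_fun key x).trans (by simp)
end

section
/- In the image persistence setting, the set of nonzero columns of the matrix F·R^φ is a filtration compatible basis for the boundary filtration B_*(C'_•) (given by t ↦ ∂(C'_t)), and for all j with r^φ_j ≠ 0 one has supp_{B_*(C'_•)}(F r^φ_j) = supp_{C'_•}(v^φ_j). -/
/-- The `j`-th column of a matrix. -/
def matCol {F : Type*} [Field F] {n m : ℕ} (X : Matrix (Fin n) (Fin m) F) (j : Fin m) :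
    Fin n → F :=
  fun i => X i j

open Classical in
/-- The pivot of a column vector: the largest index at which it has a nonzero entry
(`⊥` for the zero vector). -/
noncomputable def pivFin {F : Type*} [Field F] {n : ℕ} (v : Fin n → F) : WithBot (Fin n) :=
  (Finset.univ.filter fun i => v i ≠ 0).max

/-- A matrix is reduced if no two nonzero columns have the same pivot. -/
def IsReducedMat {F : Type*} [Field F] {n m : ℕ} (X : Matrix (Fin n) (Fin m) F) : Prop :=
  ∀ j k : Fin m, matCol X j ≠ 0 → matCol X k ≠ 0 →
    pivFin (matCol X j) = pivFin (matCol X k) → j = k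

/-- The set of indices occurring as pivots of nonzero columns of `X`. -/
def pivsSet {F : Type*} [Field F] {n m : ℕ} (X : Matrix (Fin n) (Fin m) F) : Set (Fin n) :=
  {i | ∃ j, matCol X j ≠ 0 ∧ pivFin (matCol X j) = ↑i}

/-- Upper-triangular square matrix. -/
def UpperTri {F : Type*} [Field F] {n : ℕ} (V : Matrix (Fin n) (Fin n) F) : Prop :=
  ∀ i j : Fin n, j < i → V i j = 0

section aux
variable {F : Type*} [Field F] {n : ℕ}

lemma pivFin_eq_bot_iff (v : Fin n → F) : pivFin v = ⊥ ↔ v = 0 := by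
  classical
  rw [pivFin, Finset.max_eq_bot, Finset.filter_eq_empty_iff]
  constructor
  · intro h; funext i; by_contra hi; exact h (Finset.mem_univ i) hi
  · intro h i _ hi; exact hi (by rw [h]; rfl)

lemma exists_pivFin {v : Fin n → F} (hv : v ≠ 0) : ∃ p : Fin n, pivFin v = ↑p := by
  rcases h : pivFin v with _ | p
  · exact absurd ((pivFin_eq_bot_iff v).mp h) hv
  · exact ⟨p, rfl⟩

lemma apply_pivFin_ne_zero {v : Fin n → F} {p : Fin n} (h : pivFin v = ↑p) : v p ≠ 0 := by
  classical
  unfold pivFin at h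
  exact (Finset.mem_filter.mp (Finset.mem_of_max h)).2

lemma le_pivFin {v : Fin n → F} {i : Fin n} (h : v i ≠ 0) :
    (↑i : WithBot (Fin n)) ≤ pivFin v := by
  classical
  exact Finset.le_max (Finset.mem_filter.mpr ⟨Finset.mem_univ i, h⟩)

lemma eq_zero_of_pivFin_lt {v : Fin n → F} {i : Fin n} (h : pivFin v < ↑i) : v i = 0 := by
  by_contra hi; exact absurd (le_pivFin hi) (not_le.mpr h)

lemma li_of_piv_inj (B : Set (Fin n → F)) (h0 : (0 : Fin n → F) ∉ B)
    (hinj : ∀ v ∈ B, ∀ w ∈ B, pivFin v = pivFin w → v = w) :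
    LinearIndependent F ((↑) : B → (Fin n → F)) := by
  classical
  rw [linearIndependent_iff']
  intro s g hsum i hi
  by_contra hgi
  set s' := s.filter (fun k => g k ≠ 0) with hs'
  have hne : s'.Nonempty := ⟨i, Finset.mem_filter.mpr ⟨hi, hgi⟩⟩
  obtain ⟨j, hj, hjmax⟩ := s'.exists_max_image (fun k => pivFin (k : Fin n → F)) hne
  have hjne : (j : Fin n → F) ≠ 0 := fun h => h0 (h ▸ j.2)
  obtain ⟨p, hp⟩ := exists_pivFin hjne
  have hgj : g j ≠ 0 := (Finset.mem_filter.mp hj).2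
  have hjmem : j ∈ s := (Finset.mem_filter.mp hj).1
  have hterm : ∀ k ∈ s, k ≠ j → (g k • (k : Fin n → F)) p = 0 := by
    intro k hk hkj
    by_cases hgk : g k = 0
    · simp [hgk]
    · have hk' : k ∈ s' := Finset.mem_filter.mpr ⟨hk, hgk⟩
      have hle : pivFin (k : Fin n → F) ≤ ↑p := hp ▸ hjmax k hk'
      have hne' : pivFin (k : Fin n → F) ≠ ↑p := by
        intro he
        exact hkj (Subtype.ext (hinj _ k.2 _ j.2 (he.trans hp.symm)))
      have hlt : pivFin (k : Fin n → F) < ↑p := lt_of_le_of_ne hle hne'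
      simp [eq_zero_of_pivFin_lt hlt]
  have h0' : (∑ k ∈ s, g k • (k : Fin n → F)) p = 0 := by rw [hsum]; rfl
  rw [Finset.sum_apply, Finset.sum_eq_single_of_mem j hjmem hterm] at h0'
  exact mul_ne_zero hgj (apply_pivFin_ne_zero hp) h0'

lemma matCol_mul {m : ℕ} (M : Matrix (Fin n) (Fin m) F) (W : Matrix (Fin m) (Fin m) F)
    (j : Fin m) : matCol (M * W) j = M.mulVec (matCol W j) := by
  funext r
  simp [matCol, Matrix.mul_apply, Matrix.mulVec, dotProduct]

lemma mulVec_eq_sum_cols (M : Matrix (Fin n) (Fin n) F) (v : Fin n → F) :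
    M.mulVec v = ∑ i, v i • matCol M i := by
  funext r
  simp [Matrix.mulVec, dotProduct, matCol, Finset.sum_apply, mul_comm]

lemma mulVec_single_one' (M : Matrix (Fin n) (Fin n) F) (i : Fin n) :
    M.mulVec (Pi.single i (1 : F)) = matCol M i := by
  funext r; simp [matCol]

lemma upperTri_blockTriangular {W : Matrix (Fin n) (Fin n) F} (h : UpperTri W) :
    W.BlockTriangular id := fun i j hij => h i j hij

lemma diag_ne_zero_of_upperTri {W : Matrix (Fin n) (Fin n) F} (h : UpperTri W)
    (hdet : IsUnit W.det) (j : Fin n) : W j j ≠ 0 := by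
  rw [Matrix.det_of_upperTriangular (upperTri_blockTriangular h)] at hdet
  intro hz
  rw [isUnit_iff_ne_zero] at hdet
  exact hdet (Finset.prod_eq_zero (Finset.mem_univ j) hz)

lemma upperTri_inv {W : Matrix (Fin n) (Fin n) F} (h : UpperTri W) (hdet : IsUnit W.det) :
    UpperTri W⁻¹ := by
  have : Invertible W := W.invertibleOfIsUnitDet hdet
  exact fun i j hij => Matrix.blockTriangular_inv_of_blockTriangular
    (upperTri_blockTriangular h) hij

lemma span_cols_mul_le (M W : Matrix (Fin n) (Fin n) F) (hW : UpperTri W)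
    (S : Set (Fin n)) (hS : ∀ j k : Fin n, j ≤ k → k ∈ S → j ∈ S) :
    Submodule.span F (matCol (M * W) '' S) ≤ Submodule.span F (matCol M '' S) := by
  rw [Submodule.span_le]
  rintro _ ⟨k, hk, rfl⟩
  rw [SetLike.mem_coe, matCol_mul, mulVec_eq_sum_cols]
  apply Submodule.sum_mem
  intro i _
  by_cases h : W i k = 0
  · have : matCol W k i = 0 := h
    rw [this, zero_smul]; exact Submodule.zero_mem _
  · have hik : i ≤ k := le_of_not_gt (fun hlt => h (hW i k hlt))
    exact Submodule.smul_mem _ _ (Submodule.subset_span ⟨i, hS i k hik hk, rfl⟩)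

lemma span_cols_mul_eq (M W : Matrix (Fin n) (Fin n) F) (hW : UpperTri W) (hdet : IsUnit W.det)
    (S : Set (Fin n)) (hS : ∀ j k : Fin n, j ≤ k → k ∈ S → j ∈ S) :
    Submodule.span F (matCol (M * W) '' S) = Submodule.span F (matCol M '' S) := by
  refine le_antisymm (span_cols_mul_le M W hW S hS) ?_
  have hM : M = (M * W) * W⁻¹ := by
    rw [mul_assoc, Matrix.mul_nonsing_inv _ hdet, mul_one]
  calc Submodule.span F (matCol M '' S)
      = Submodule.span F (matCol ((M * W) * W⁻¹) '' S) := by rw [← hM]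
    _ ≤ Submodule.span F (matCol (M * W) '' S) :=
        span_cols_mul_le _ _ (upperTri_inv hW hdet) S hS

end aux

section filt
variable {F : Type*} [Field F] {n N : ℕ}

lemma mem_filt_iff (A : Fin (N + 1) → Submodule F (Fin n → F))
    (hspan : ∀ t, Submodule.span F
      ((Set.range fun j : Fin n => Pi.single j (1 : F)) ∩ ↑(A t)) = A t)
    (t : Fin (N + 1)) (v : Fin n → F) :
    v ∈ A t ↔ ∀ i, v i ≠ 0 → Pi.single i (1 : F) ∈ A t := by
  constructor
  · intro hv
    let P : Submodule F (Fin n → F) :=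
      { carrier := {w | ∀ i, Pi.single i (1 : F) ∉ A t → w i = 0}
        add_mem' := fun ha hb i hi => by
          simp only [Pi.add_apply, ha i hi, hb i hi, add_zero]
        zero_mem' := fun i _ => rfl
        smul_mem' := fun c w hw i hi => by
          simp only [Pi.smul_apply, hw i hi, smul_zero] }
    have hle : A t ≤ P := by
      rw [← hspan t]
      apply Submodule.span_le.mpr
      rintro w ⟨⟨i, rfl⟩, hw⟩ k hk
      by_cases hki : k = i
      · exact absurd (hki ▸ hw) hk
      · exact Pi.single_eq_of_ne hki 1
    intro i hvi
    by_contra hni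
    exact hvi (hle hv i hni)
  · intro h
    have hv : v = ∑ i, Pi.single i (v i) := (Finset.univ_sum_single v).symm
    rw [hv]
    apply Submodule.sum_mem
    intro i _
    by_cases hvi : v i = 0
    · rw [hvi, Pi.single_zero]; exact Submodule.zero_mem _
    · have : Pi.single i (v i) = v i • (Pi.single i (1 : F) : Fin n → F) := by
        funext k
        by_cases hk : k = i
        · subst hk; simp
        · simp [Pi.single_eq_of_ne hk]
      rw [this]
      exact Submodule.smul_mem _ _ (h i hvi)

lemma filt_eq_span (A : Fin (N + 1) → Submodule F (Fin n → F))
    (hspan : ∀ t, Submodule.span F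
      ((Set.range fun j : Fin n => Pi.single j (1 : F)) ∩ ↑(A t)) = A t)
    (t : Fin (N + 1)) :
    A t = Submodule.span F ((fun j : Fin n => Pi.single j (1 : F)) ''
      {i : Fin n | Pi.single i (1 : F) ∈ A t}) := by
  have hset : (Set.range fun j : Fin n => Pi.single j (1 : F)) ∩ ↑(A t)
      = (fun j : Fin n => Pi.single j (1 : F)) '' {i : Fin n | Pi.single i (1 : F) ∈ A t} := by
    ext w
    constructor
    · rintro ⟨⟨i, rfl⟩, hw⟩; exact ⟨i, hw, rfl⟩
    · rintro ⟨i, hi, rfl⟩; exact ⟨⟨i, rfl⟩, hi⟩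
  conv_lhs => rw [← hspan t]
  rw [hset]

end filt


/- Statement 8: the nonzero columns of F·R^φ form a filtration compatible basis of the
boundary filtration B_*(C'_•) : t ↦ ∂'(C'_t), with supports given by the columns of V^φ. -/
theorem stmt_8 {F : Type*} [Field F] {n N : ℕ}
    -- filtrations of the chain complexes C and C', expressed in the coordinates of the
    -- filtration compatible ordered bases 𝔠 and 𝔠' (the standard bases)
    (A A' : Fin (N + 1) → Submodule F (Fin n → F))
    (hmono : Monotone A) (htop : A (Fin.last N) = ⊤)
    (hmono' : Monotone A') (htop' : A' (Fin.last N) = ⊤)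
    (hcompat : IsCompatBasis A (Set.range fun j : Fin n => Pi.single j (1 : F)))
    (hord : ∀ j k : Fin n, j ≤ k →
      fsupp A (Pi.single k (1 : F)) ⊆ fsupp A (Pi.single j (1 : F)))
    (hcompat' : IsCompatBasis A' (Set.range fun j : Fin n => Pi.single j (1 : F)))
    (hord' : ∀ j k : Fin n, j ≤ k →
      fsupp A' (Pi.single k (1 : F)) ⊆ fsupp A' (Pi.single j (1 : F)))
    -- graded chain complex structures, with filtration boundary matrices D and D'
    (deg deg' : Fin n → ℕ) (D D' : Matrix (Fin n) (Fin n) F)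
    (hdeg : ∀ i j : Fin n, D i j ≠ 0 → deg j = deg i + 1)
    (hdeg' : ∀ i j : Fin n, D' i j ≠ 0 → deg' j = deg' i + 1)
    (hD2 : D * D = 0) (hD'2 : D' * D' = 0)
    (hsubcx : ∀ t, (A t).map D.mulVecLin ≤ A t)
    (hsubcx' : ∀ t, (A' t).map D'.mulVecLin ≤ A' t)
    -- the monomorphism φ of filtrations of chain complexes, an isomorphism on the
    -- final filtration step, represented by the invertible matrix Fm
    (Fm : Matrix (Fin n) (Fin n) F) (hFm : IsUnit Fm.det)
    (hphifilt : ∀ t, (A t).map Fm.mulVecLin ≤ A' t)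
    (hphiD : Fm * D = D' * Fm)
    -- the mixed-basis boundary matrix D^φ = D·F⁻¹ = F⁻¹·D'
    (Dφ : Matrix (Fin n) (Fin n) F) (hDφ : Dφ = D * Fm⁻¹)
    -- the reductions R = D·V and R^φ = D^φ·V^φ
    (V Vφ R Rφ : Matrix (Fin n) (Fin n) F)
    (hR : R = D * V) (hRφ : Rφ = Dφ * Vφ)
    (hVut : UpperTri V) (hVunit : IsUnit V.det)
    (hVφut : UpperTri Vφ) (hVφunit : IsUnit Vφ.det)
    (hRred : IsReducedMat R) (hRφred : IsReducedMat Rφ) :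
    IsCompatBasis (fun t => (A' t).map D'.mulVecLin)
      {v | ∃ j, v = matCol (Fm * Rφ) j ∧ v ≠ 0} ∧
    ∀ j : Fin n, matCol Rφ j ≠ 0 →
      fsupp (fun t => (A' t).map D'.mulVecLin) (matCol (Fm * Rφ) j) =
        fsupp A' (matCol Vφ j) := by
  classical
  have hFmUnit : IsUnit Fm := (Matrix.isUnit_iff_isUnit_det Fm).mpr hFm
  have hFmInj : Function.Injective Fm.mulVec := Matrix.mulVec_injective_iff_isUnit.mpr hFmUnit
  have hFmmul : Fm * Fm⁻¹ = 1 := Matrix.mul_nonsing_inv Fm hFm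
  have hG : Fm * Rφ = D' * Vφ := by
    rw [hRφ, hDφ, ← mul_assoc, ← mul_assoc, hphiD, mul_assoc D' Fm, hFmmul, mul_one]
  have hSlow : ∀ t : Fin (N + 1), ∀ j k : Fin n, j ≤ k →
      k ∈ {i : Fin n | Pi.single i (1 : F) ∈ A' t} →
      j ∈ {i : Fin n | Pi.single i (1 : F) ∈ A' t} :=
    fun t j k hjk hk => hord' j k hjk hk
  have hspan' := hcompat'.2.2
  have hVφdiag : ∀ k, Vφ k k ≠ 0 := diag_ne_zero_of_upperTri hVφut hVφunit
  have hcolV : ∀ (t) (k : Fin n), Pi.single k (1 : F) ∈ A' t → matCol Vφ k ∈ A' t := by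
    intro t k hk
    rw [mem_filt_iff A' hspan' t]
    intro i hi
    have hik : i ≤ k := le_of_not_gt fun hlt => hi (hVφut i k hlt)
    exact hSlow t i k hik hk
  have hmap : ∀ t, (A' t).map D'.mulVecLin
      = Submodule.span F (matCol (Fm * Rφ) ''
          {i : Fin n | Pi.single i (1 : F) ∈ A' t}) := by
    intro t
    rw [hG, span_cols_mul_eq D' Vφ hVφut hVφunit _ (hSlow t)]
    conv_lhs => rw [filt_eq_span A' hspan' t]
    rw [Submodule.map_span, ← Set.image_comp]
    have hcomp : (D'.mulVecLin ∘ fun j : Fin n => Pi.single j (1 : F)) = matCol D' := by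
      funext i
      simp only [Function.comp_apply, Matrix.mulVecLin_apply]
      exact mulVec_single_one' D' i
    rw [hcomp]
  have hGcolD : ∀ k, matCol (Fm * Rφ) k = D'.mulVec (matCol Vφ k) := by
    intro k; rw [hG, matCol_mul]
  have hGmem : ∀ (t) (k : Fin n), Pi.single k (1 : F) ∈ A' t →
      matCol (Fm * Rφ) k ∈ (A' t).map D'.mulVecLin := by
    intro t k hk
    exact ⟨matCol Vφ k, hcolV t k hk, (hGcolD k).symm⟩
  have hcolzero : ∀ j, matCol (Fm * Rφ) j = Fm.mulVec (matCol Rφ j) :=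
    fun j => matCol_mul Fm Rφ j
  have hcolne : ∀ j, matCol (Fm * Rφ) j ≠ 0 ↔ matCol Rφ j ≠ 0 := by
    intro j
    rw [hcolzero j]
    constructor
    · intro h hc; exact h (by rw [hc, Matrix.mulVec_zero])
    · intro h hc; exact h (hFmInj (by rw [hc, Matrix.mulVec_zero]))
  have li0 : LinearIndependent F
      ((↑) : {v | ∃ j, v = matCol Rφ j ∧ v ≠ 0} → (Fin n → F)) := by
    apply li_of_piv_inj
    · rintro ⟨j, _, h0⟩; exact h0 rfl
    · rintro v ⟨j, rfl, hj⟩ w ⟨k, rfl, hk⟩ hpiv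
      rw [hRφred j k hj hk hpiv]
  have hBeq : {v | ∃ j, v = matCol (Fm * Rφ) j ∧ v ≠ 0}
      = Fm.mulVecLin '' {v | ∃ j, v = matCol Rφ j ∧ v ≠ 0} := by
    ext v
    constructor
    · rintro ⟨j, rfl, hv⟩
      refine ⟨matCol Rφ j, ⟨j, rfl, (hcolne j).mp hv⟩, ?_⟩
      rw [Matrix.mulVecLin_apply, ← hcolzero j]
    · rintro ⟨w, ⟨j, rfl, hw⟩, rfl⟩
      refine ⟨j, ?_, ?_⟩
      · rw [Matrix.mulVecLin_apply, ← hcolzero j]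
      · rw [Matrix.mulVecLin_apply, ← hcolzero j]; exact (hcolne j).mpr hw
  have hmulVecLinInj : Function.Injective Fm.mulVecLin := by
    rw [Matrix.coe_mulVecLin]; exact hFmInj
  have hBli : LinearIndependent F
      ((↑) : {v | ∃ j, v = matCol (Fm * Rφ) j ∧ v ≠ 0} → (Fin n → F)) := by
    rw [hBeq]
    have h1 : LinearIndependent F
        (fun x : {v | ∃ j, v = matCol Rφ j ∧ v ≠ 0} => Fm.mulVecLin (x : Fin n → F)) :=
      li0.map' Fm.mulVecLin (LinearMap.ker_eq_bot.mpr hmulVecLinInj)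
    exact (linearIndepOn_iff_image (hmulVecLinInj.injOn)).mp h1
  have hspanpart : ∀ t, Submodule.span F
      ({v | ∃ j, v = matCol (Fm * Rφ) j ∧ v ≠ 0} ∩ ↑((A' t).map D'.mulVecLin))
      = (A' t).map D'.mulVecLin := by
    intro t
    refine le_antisymm (Submodule.span_le.mpr Set.inter_subset_right) ?_
    rw [hmap t, Submodule.span_le]
    rintro _ ⟨k, hk, rfl⟩
    by_cases hz : matCol (Fm * Rφ) k = 0
    · rw [hz]; exact Submodule.zero_mem _
    · exact Submodule.subset_span ⟨⟨k, rfl, hz⟩, Submodule.subset_span ⟨k, hk, rfl⟩⟩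
  have hsub : {v | ∃ j, v = matCol (Fm * Rφ) j ∧ v ≠ 0}
      ⊆ ↑((A' (Fin.last N)).map D'.mulVecLin) := by
    rintro v ⟨j, rfl, hv⟩
    exact hGmem (Fin.last N) j (by rw [htop']; exact Submodule.mem_top)
  have hpart2 : ∀ j, matCol Rφ j ≠ 0 → ∀ t,
      (matCol (Fm * Rφ) j ∈ (A' t).map D'.mulVecLin ↔ matCol Vφ j ∈ A' t) := by
    intro j hj t
    constructor
    · intro h
      rw [hmap t] at h
      have h2 := Submodule.apply_mem_span_image_of_mem_span (Fm⁻¹).mulVecLin h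
      have hFiG : ∀ k, (Fm⁻¹).mulVecLin (matCol (Fm * Rφ) k) = matCol Rφ k := by
        intro k
        rw [Matrix.mulVecLin_apply, ← matCol_mul, ← mul_assoc,
          Matrix.nonsing_inv_mul Fm hFm, one_mul]
      rw [← Set.image_comp] at h2
      rw [show ⇑(Fm⁻¹).mulVecLin ∘ matCol (Fm * Rφ) = matCol Rφ from funext hFiG,
        hFiG j] at h2
      have hjS : Pi.single j (1 : F) ∈ A' t := by
        by_contra hjS
        have hx0 : (⟨matCol Rφ j, j, rfl, hj⟩ :
            {v | ∃ j, v = matCol Rφ j ∧ v ≠ 0}) ∉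
            {x : {v | ∃ j, v = matCol Rφ j ∧ v ≠ 0} |
              ∃ k, Pi.single k (1 : F) ∈ A' t ∧ (x : Fin n → F) = matCol Rφ k} := by
          rintro ⟨k, hk, hEq⟩
          have hEq' : matCol Rφ j = matCol Rφ k := hEq
          have hk0 : matCol Rφ k ≠ 0 := hEq' ▸ hj
          have hjk : j = k := hRφred j k hj hk0 (by rw [hEq'])
          exact hjS (hjk ▸ hk)
        have hnot := li0.notMem_span_image hx0
        apply hnot
        have hgen : matCol Rφ '' {i : Fin n | Pi.single i (1 : F) ∈ A' t} ⊆
            ↑(Submodule.span F (((↑) : {v | ∃ j, v = matCol Rφ j ∧ v ≠ 0} → (Fin n → F)) ''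
              {x : {v | ∃ j, v = matCol Rφ j ∧ v ≠ 0} |
                ∃ k, Pi.single k (1 : F) ∈ A' t ∧ (x : Fin n → F) = matCol Rφ k})) := by
          rintro _ ⟨k, hk, rfl⟩
          by_cases hz : matCol Rφ k = 0
          · rw [hz]; exact Submodule.zero_mem _
          · exact Submodule.subset_span ⟨⟨matCol Rφ k, k, rfl, hz⟩, ⟨k, hk, rfl⟩, rfl⟩
        exact Submodule.span_le.mpr hgen h2
      exact hcolV t j hjS
    · intro h
      exact ⟨matCol Vφ j, h, (hGcolD j).symm⟩
  refine ⟨⟨hsub, hBli, hspanpart⟩, ?_⟩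
  intro j hj
  ext t
  simp only [fsupp, Set.mem_setOf_eq]
  exact hpart2 j hj t
end

section
/- In the image persistence setting, the family 𝔛 consisting of the nonzero columns of R^φ together with the columns v_j of V for those indices j not in pivs R^φ is a filtration compatible basis for C_• (under the identification of elements of C with coordinate vectors with respect to 𝔠), where for each nonzero column r^φ_j one has supp_{C_•}(r^φ_j) = supp_{C_•}(v_{piv r^φ_j}). -/
/- Statement 9: the family 𝔛 consisting of the nonzero columns of R^φ together with the
columns v_j of V for j ∉ pivs R^φ is a filtration compatible basis for C_• (in the
coordinates given by 𝔠), and supp(r^φ_j) = supp(v_{piv r^φ_j}) for each nonzero r^φ_j. -/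
-- ### auxiliary lemmas

open Classical in
lemma pivFin_spec {F : Type*} [Field F] {n : ℕ} {v : Fin n → F} {p : Fin n}
    (h : pivFin v = ↑p) : v p ≠ 0 ∧ ∀ k, v k ≠ 0 → k ≤ p := by
  constructor
  · have := Finset.mem_of_max h
    simpa using this
  · intro k hk
    have hk' : k ∈ Finset.univ.filter fun i => v i ≠ 0 := by simpa using hk
    have h2 := Finset.le_max hk'
    rw [show (Finset.univ.filter fun i => v i ≠ 0).max = pivFin v from rfl, h] at h2
    exact_mod_cast h2

open Classical in
lemma pivFin_exists {F : Type*} [Field F] {n : ℕ} {v : Fin n → F} (h : v ≠ 0) :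
    ∃ p : Fin n, pivFin v = ↑p := by
  have : (Finset.univ.filter fun i => v i ≠ 0).Nonempty := by
    obtain ⟨i, hi⟩ := Function.ne_iff.mp h
    exact ⟨i, by simpa using hi⟩
  obtain ⟨a, ha⟩ := Finset.max_of_nonempty this
  exact ⟨a, ha⟩

lemma pivFin_ne_zero {F : Type*} [Field F] {n : ℕ} {v : Fin n → F} {p : Fin n}
    (h : pivFin v = ↑p) : v ≠ 0 :=
  fun h0 => (pivFin_spec h).1 (by simp [h0])

open Classical in
lemma pivFin_eq {F : Type*} [Field F] {n : ℕ} {v : Fin n → F} {p : Fin n}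
    (hp : v p ≠ 0) (hle : ∀ k, v k ≠ 0 → k ≤ p) : pivFin v = ↑p := by
  apply le_antisymm
  · apply Finset.max_le
    intro b hb
    simp only [Finset.mem_filter] at hb
    exact_mod_cast hle b hb.2
  · exact Finset.le_max (by simpa using hp)

lemma li_of_pivots {F : Type*} [Field F] {n : ℕ} (x : Fin n → Fin n → F)
    (hx : ∀ p, pivFin (x p) = ↑p) : LinearIndependent F x := by
  classical
  rw [Fintype.linearIndependent_iff]
  intro g hg
  by_contra hne
  push_neg at hne
  obtain ⟨i, hi⟩ := hne
  have hs : (Finset.univ.filter fun i => g i ≠ 0).Nonempty := ⟨i, by simpa using hi⟩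
  set m := (Finset.univ.filter fun i => g i ≠ 0).max' hs with hm
  have hgm : g m ≠ 0 := by
    have := Finset.max'_mem _ hs
    simpa using this
  have hsum : ∑ i, g i * x i m = 0 := by
    have := congrFun hg m
    simpa [Finset.sum_apply] using this
  have : ∑ i, g i * x i m = g m * x m m := by
    apply Finset.sum_eq_single
    · intro b _ hbm
      by_cases hb : g b = 0
      · simp [hb]
      · have hble : b ≤ m := Finset.le_max' _ _ (by simpa using hb)
        have hblt : b < m := lt_of_le_of_ne hble hbm
        have : x b m = 0 := by
          by_contra hxbm
          exact absurd ((pivFin_spec (hx b)).2 m hxbm) (not_le.mpr hblt)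
        simp [this]
    · intro h; exact absurd (Finset.mem_univ m) h
  rw [this] at hsum
  exact (mul_ne_zero hgm (pivFin_spec (hx m)).1) hsum

/-- The submodule of vectors supported on a set of indices. -/
def suppMod (F : Type*) [Field F] {n : ℕ} (s : Set (Fin n)) : Submodule F (Fin n → F) where
  carrier := {w | ∀ j, w j ≠ 0 → j ∈ s}
  add_mem' := by
    intro a b ha hb j hj
    by_cases h : a j = 0
    · exact hb j (by simpa [h] using hj)
    · exact ha j h
  zero_mem' := by intro j hj; simp at hj
  smul_mem' := by
    intro c a ha j hj
    exact ha j (by intro h; exact hj (by simp [h]))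


theorem stmt_9 {F : Type*} [Field F] {n N : ℕ}
    -- filtrations of the chain complexes C and C', expressed in the coordinates of the
    -- filtration compatible ordered bases 𝔠 and 𝔠' (the standard bases)
    (A A' : Fin (N + 1) → Submodule F (Fin n → F))
    (hmono : Monotone A) (htop : A (Fin.last N) = ⊤)
    (hmono' : Monotone A') (htop' : A' (Fin.last N) = ⊤)
    (hcompat : IsCompatBasis A (Set.range fun j : Fin n => Pi.single j (1 : F)))
    (hord : ∀ j k : Fin n, j ≤ k →
      fsupp A (Pi.single k (1 : F)) ⊆ fsupp A (Pi.single j (1 : F)))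
    (hcompat' : IsCompatBasis A' (Set.range fun j : Fin n => Pi.single j (1 : F)))
    (hord' : ∀ j k : Fin n, j ≤ k →
      fsupp A' (Pi.single k (1 : F)) ⊆ fsupp A' (Pi.single j (1 : F)))
    -- graded chain complex structures, with filtration boundary matrices D and D'
    (deg deg' : Fin n → ℕ) (D D' : Matrix (Fin n) (Fin n) F)
    (hdeg : ∀ i j : Fin n, D i j ≠ 0 → deg j = deg i + 1)
    (hdeg' : ∀ i j : Fin n, D' i j ≠ 0 → deg' j = deg' i + 1)
    (hD2 : D * D = 0) (hD'2 : D' * D' = 0)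
    (hsubcx : ∀ t, (A t).map D.mulVecLin ≤ A t)
    (hsubcx' : ∀ t, (A' t).map D'.mulVecLin ≤ A' t)
    -- the monomorphism φ of filtrations of chain complexes, an isomorphism on the
    -- final filtration step, represented by the invertible matrix Fm
    (Fm : Matrix (Fin n) (Fin n) F) (hFm : IsUnit Fm.det)
    (hphifilt : ∀ t, (A t).map Fm.mulVecLin ≤ A' t)
    (hphiD : Fm * D = D' * Fm)
    -- the mixed-basis boundary matrix D^φ = D·F⁻¹ = F⁻¹·D'
    (Dφ : Matrix (Fin n) (Fin n) F) (hDφ : Dφ = D * Fm⁻¹)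
    -- the reductions R = D·V and R^φ = D^φ·V^φ
    (V Vφ R Rφ : Matrix (Fin n) (Fin n) F)
    (hR : R = D * V) (hRφ : Rφ = Dφ * Vφ)
    (hVut : UpperTri V) (hVunit : IsUnit V.det)
    (hVφut : UpperTri Vφ) (hVφunit : IsUnit Vφ.det)
    (hRred : IsReducedMat R) (hRφred : IsReducedMat Rφ) :
    IsCompatBasis A
      ({v | ∃ j, v = matCol Rφ j ∧ v ≠ 0} ∪
        {v | ∃ j, v = matCol V j ∧ j ∉ pivsSet Rφ}) ∧
    ∀ (j p : Fin n), matCol Rφ j ≠ 0 → pivFin (matCol Rφ j) = ↑p →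
      fsupp A (matCol Rφ j) = fsupp A (matCol V p) := by
  classical
  -- the index support of the filtration
  set S : Fin (N + 1) → Set (Fin n) := fun t => {j | Pi.single j (1 : F) ∈ A t} with hSdef
  have hdown : ∀ t, ∀ j k : Fin n, j ≤ k → k ∈ S t → j ∈ S t := by
    intro t j k hjk hk
    exact hord j k hjk hk
  -- membership characterization
  have hmemA : ∀ t (v : Fin n → F), v ∈ A t ↔ ∀ j, v j ≠ 0 → j ∈ S t := by
    intro t v
    constructor
    · intro hv
      have hle : A t ≤ suppMod F (S t) := by
        rw [← hcompat.2.2 t]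
        apply Submodule.span_le.2
        rintro w ⟨⟨j, rfl⟩, hw⟩
        intro i hi
        have hij : i = j := by
          by_contra h
          exact hi (Pi.single_eq_of_ne h 1)
        subst hij
        exact hw
      exact hle hv
    · intro hv
      have hv' : v = ∑ j, v j • (Pi.single j (1 : F) : Fin n → F) := by
        funext i
        rw [Finset.sum_apply]
        simp [Pi.single_apply]
      rw [hv']
      apply Submodule.sum_mem
      intro j _
      by_cases h : v j = 0
      · simp [h]
      · exact Submodule.smul_mem _ _ (hv j h)
  have hpivA : ∀ t (v : Fin n → F) (p : Fin n), pivFin v = ↑p → (v ∈ A t ↔ p ∈ S t) := by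
    intro t v p hp
    obtain ⟨hvp, hvle⟩ := pivFin_spec hp
    constructor
    · intro hv
      exact (hmemA t v).1 hv p hvp
    · intro hpS
      exact (hmemA t v).2 fun j hj => hdown t j p (hvle j hj) hpS
  -- diagonal entries of V are nonzero
  have hVdiag : ∀ p : Fin n, V p p ≠ 0 := by
    have hdet : V.det = ∏ i, V i i := Matrix.det_of_upperTriangular hVut
    have hprod : (∏ i, V i i) ≠ 0 := by
      rw [← hdet]
      exact hVunit.ne_zero
    intro p
    exact Finset.prod_ne_zero_iff.1 hprod p (Finset.mem_univ p)
  have hVpiv : ∀ p : Fin n, pivFin (matCol V p) = ↑p := by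
    intro p
    apply pivFin_eq (v := matCol V p) (hVdiag p)
    intro k hk
    by_contra h
    push_neg at h
    exact hk (hVut k p h)
  -- the basis family as a function of pivots
  set x : Fin n → (Fin n → F) :=
    fun p => if h : p ∈ pivsSet Rφ then matCol Rφ h.choose else matCol V p with hxdef
  have hxpiv : ∀ p, pivFin (x p) = ↑p := by
    intro p
    by_cases h : p ∈ pivsSet Rφ
    · simp only [hxdef, dif_pos h]
      exact h.choose_spec.2
    · simp only [hxdef, dif_neg h]
      exact hVpiv p
  have hXeq : ({v | ∃ j, v = matCol Rφ j ∧ v ≠ 0} ∪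
      {v | ∃ j, v = matCol V j ∧ j ∉ pivsSet Rφ}) = Set.range x := by
    ext v
    constructor
    · rintro (⟨j, rfl, hvne⟩ | ⟨j, rfl, hj⟩)
      · obtain ⟨p, hp⟩ := pivFin_exists hvne
        have hpmem : p ∈ pivsSet Rφ := ⟨j, hvne, hp⟩
        refine ⟨p, ?_⟩
        simp only [hxdef, dif_pos hpmem]
        have hspec := hpmem.choose_spec
        have : hpmem.choose = j := hRφred _ _ hspec.1 hvne (hspec.2.trans hp.symm)
        rw [this]
      · exact ⟨j, by simp only [hxdef, dif_neg hj]⟩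
    · rintro ⟨p, rfl⟩
      by_cases h : p ∈ pivsSet Rφ
      · left
        exact ⟨h.choose, by simp only [hxdef, dif_pos h], pivFin_ne_zero (hxpiv p)⟩
      · right
        exact ⟨p, by simp only [hxdef, dif_neg h], h⟩
  have hli : LinearIndependent F x := li_of_pivots x hxpiv
  -- spanning property
  have hspan : ∀ t, Submodule.span F (Set.range x ∩ ↑(A t)) = A t := by
    intro t
    apply le_antisymm
    · rw [Submodule.span_le]
      rintro v ⟨_, hv⟩
      exact hv
    · intro v hv
      suffices H : ∀ b : ℕ, ∀ w : Fin n → F, w ∈ A t → (∀ k : Fin n, w k ≠ 0 → (k : ℕ) < b) →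
          w ∈ Submodule.span F (Set.range x ∩ ↑(A t)) by
        exact H n v hv fun k _ => k.isLt
      intro b
      induction b with
      | zero =>
        intro w hw hb
        have : w = 0 := funext fun k => by
          by_contra h
          exact Nat.not_lt_zero _ (hb k h)
        rw [this]
        exact Submodule.zero_mem _
      | succ b ih =>
        intro w hw hb
        by_cases hw0 : w = 0
        · rw [hw0]; exact Submodule.zero_mem _
        · obtain ⟨m, hm⟩ := pivFin_exists hw0
          obtain ⟨hwm, hwle⟩ := pivFin_spec hm
          have hmS : m ∈ S t := (hmemA t w).1 hw m hwm
          have hxm : x m ∈ A t := (hpivA t (x m) m (hxpiv m)).2 hmS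
          obtain ⟨hxmm, hxmle⟩ := pivFin_spec (hxpiv m)
          set c : F := w m / x m m with hc
          set u : Fin n → F := w - c • x m with hu
          have hu_mem : u ∈ A t := Submodule.sub_mem _ hw (Submodule.smul_mem _ _ hxm)
          have hum : u m = 0 := by
            simp only [hu, hc, Pi.sub_apply, Pi.smul_apply, smul_eq_mul]
            field_simp
            ring
          have hub : ∀ k : Fin n, u k ≠ 0 → (k : ℕ) < b := by
            intro k hk
            have hk_le : k ≤ m := by
              by_contra h
              push_neg at h
              have h1 : w k = 0 := by
                by_contra h1
                exact absurd (hwle k h1) (not_le.mpr h)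
              have h2 : x m k = 0 := by
                by_contra h2
                exact absurd (hxmle k h2) (not_le.mpr h)
              exact hk (by simp [hu, h1, h2])
            have hk_ne : k ≠ m := fun h => hk (h ▸ hum)
            have hklt : (k : ℕ) < (m : ℕ) := by
              have := lt_of_le_of_ne hk_le hk_ne
              exact this
            have hmb : (m : ℕ) < b + 1 := hb m hwm
            omega
          have hu_span := ih u hu_mem hub
          have hxm_span : x m ∈ Submodule.span F (Set.range x ∩ ↑(A t)) :=
            Submodule.subset_span ⟨⟨m, rfl⟩, hxm⟩
          have hwdecomp : w = u + c • x m := by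
            simp [hu]
          rw [hwdecomp]
          exact Submodule.add_mem _ hu_span (Submodule.smul_mem _ _ hxm_span)
  refine ⟨⟨?_, ?_, ?_⟩, ?_⟩
  · rw [htop]
    intro v _
    exact Submodule.mem_top
  · rw [hXeq]
    exact hli.linearIndepOn_id
  · intro t
    rw [hXeq]
    exact hspan t
  · intro j p hne hpiv
    ext t
    constructor
    · intro ht
      exact (hpivA t (matCol V p) p (hVpiv p)).2 ((hpivA t (matCol Rφ j) p hpiv).1 ht)
    · intro ht
      exact (hpivA t (matCol Rφ j) p hpiv).2 ((hpivA t (matCol V p) p (hVpiv p)).1 ht)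
end
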